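/- Define d([0],[0,1]) as the minimum over doublings: the distance from the chord [0,0] to [0,1] in ℝ²/S₂ equals 1, the distance from [0,1] (via [0,1,1] or [0,0,1]) to [0,1,2] in ℝ³/S₃ equals 1, but the minimal distance from [0,0,0] to [0,1,2] in ℝ³/S₃ equals 3. Hence d([0],[0,1]) + d([0,1],[0,1,2]) = 2 < 3 = d([0],[0,1,2]), so the triangle inequality fails for the naively extended distance d across strata. -/

import Mathlib

/-!
Every voice leading out of a unison chord costs the same, the total spread of the target, so
`[0, 0, 0]` is at distance `|0 - 0| + |0 - 1| + |0 - 2| = 3` from `[0, 1, 2]`. Passing through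
`[0, 1]` instead, each leg only has to move one voice by one step: doubling a note lets the
intermediate chord absorb the new voice for free.
-/

open Finset

noncomputable def permDist (n : ℕ) (x y : Fin n → ℝ) : ℝ :=
  Finset.univ.inf' Finset.univ_nonempty
    (fun s : Equiv.Perm (Fin n) => ∑ i, |x i - y (s i)|)

section permDist

variable {n : ℕ} {x y : Fin n → ℝ}

theorem permDist_le_sum (s : Equiv.Perm (Fin n)) : permDist n x y ≤ ∑ i, |x i - y (s i)| :=
  Finset.inf'_le _ (Finset.mem_univ s)

theorem permDist_le_sum_abs_sub : permDist n x y ≤ ∑ i, |x i - y i| :=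
  permDist_le_sum 1

theorem le_permDist_iff {c : ℝ} :
    c ≤ permDist n x y ↔ ∀ s : Equiv.Perm (Fin n), c ≤ ∑ i, |x i - y (s i)| := by
  simp [permDist, Finset.le_inf'_iff]

theorem le_permDist_of_forall_le_abs_sub {c : ℝ} (k : Fin n) (h : ∀ j, c ≤ |x j - y k|) :
    c ≤ permDist n x y := by
  refine le_permDist_iff.2 fun s => ?_
  calc c ≤ |x (s.symm k) - y (s (s.symm k))| := by rw [s.apply_symm_apply]; exact h _
    _ ≤ ∑ i, |x i - y (s i)| :=
      Finset.single_le_sum (f := fun i => |x i - y (s i)|) (fun _ _ => abs_nonneg _) (mem_univ _)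

theorem permDist_const_left (a : ℝ) : permDist n (fun _ => a) y = ∑ i, |a - y i| :=
  le_antisymm permDist_le_sum_abs_sub <| le_permDist_iff.2 fun s =>
    (Equiv.sum_comp s fun i => |a - y i|).ge

end permDist

/-- The naive cross-strata distance d violates the triangle inequality:
d([0],[0,1]) = 1, d([0,1],[0,1,2]) = 1, but d([0],[0,1,2]) = 3, and 1 + 1 < 3. -/
theorem naive_dist_triangle_fails :
    permDist 2 ![0, 0] ![0, 1] = 1 ∧
    min (permDist 3 ![0, 1, 1] ![0, 1, 2]) (permDist 3 ![0, 0, 1] ![0, 1, 2]) = 1 ∧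
    permDist 3 ![0, 0, 0] ![0, 1, 2] = 3 ∧
    permDist 2 ![0, 0] ![0, 1] +
      min (permDist 3 ![0, 1, 1] ![0, 1, 2]) (permDist 3 ![0, 0, 1] ![0, 1, 2])
      < permDist 3 ![0, 0, 0] ![0, 1, 2] := by
  have unison₂ : permDist 2 ![0, 0] ![0, 1] = 1 := by
    rw [show (![0, 0] : Fin 2 → ℝ) = fun _ => 0 by ext i; fin_cases i <;> rfl,
      permDist_const_left]
    simp [Fin.sum_univ_succ]
  have unison₃ : permDist 3 ![0, 0, 0] ![0, 1, 2] = 3 := by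
    rw [show (![0, 0, 0] : Fin 3 → ℝ) = fun _ => 0 by ext i; fin_cases i <;> rfl,
      permDist_const_left]
    norm_num [Fin.sum_univ_succ]
  -- In both doublings of `[0, 1]` the note `2` of `[0, 1, 2]` is at distance at least `1`.
  have doubled_high : permDist 3 ![0, 1, 1] ![0, 1, 2] = 1 := by
    refine le_antisymm ?_ (le_permDist_of_forall_le_abs_sub 2 fun j => ?_)
    · refine permDist_le_sum_abs_sub.trans ?_
      norm_num [Fin.sum_univ_succ]
    · fin_cases j <;> norm_num [Matrix.cons_val_two]
  have doubled_low : 1 ≤ permDist 3 ![0, 0, 1] ![0, 1, 2] :=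
    le_permDist_of_forall_le_abs_sub 2 fun j => by fin_cases j <;> norm_num [Matrix.cons_val_two]
  have doubled :
      min (permDist 3 ![0, 1, 1] ![0, 1, 2]) (permDist 3 ![0, 0, 1] ![0, 1, 2]) = 1 := by
    rw [doubled_high, min_eq_left doubled_low]
  refine ⟨unison₂, doubled, unison₃, ?_⟩
  rw [unison₂, doubled, unison₃]
  norm_num
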